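/- For every integer n \geq 1, 0 \leq H_n - ln(n) - \gamma \leq 1/(2n), where H_n = \sum_{i=1}^n 1/i is the n-th harmonic number and \gamma is the Euler–Mascheroni constant. -/

import Mathlib

/-!
The lower bound holds because `H_n - log n` decreases to `γ`. For the upper bound, the sequence
`H_n - log n - 1/(2n)` is increasing, because the trapezoid rule overestimates the integral of
the convex function `1/t`: `log (x + 1) - log x ≤ (1/x + 1/(x+1)) / 2`. Since it also tends to
`γ`, it stays below `γ`.
-/

open Real Filter Topology

lemma Real.log_le_sub_inv_div_two {x : ℝ} (hx : 1 ≤ x) : log x ≤ (x - x⁻¹) / 2 := by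
  rw [← sinh_log (by linarith)]
  exact self_le_sinh_iff.2 (log_nonneg hx)

lemma Real.log_add_one_sub_log_le {x : ℝ} (hx : 0 < x) :
    log (x + 1) - log x ≤ (1 / x + 1 / (x + 1)) / 2 := by
  have h := log_le_sub_inv_div_two (x := (x + 1) / x) (by rw [le_div_iff₀ hx]; linarith)
  rw [log_div (by positivity) hx.ne'] at h
  refine h.trans_eq ?_
  field_simp
  ring

lemma monotone_harmonic_sub_log_sub_one_div_two_mul :
    Monotone fun n : ℕ ↦
      (harmonic (n + 1) : ℝ) - log ((n + 1 : ℕ) : ℝ) - 1 / (2 * ((n + 1 : ℕ) : ℝ)) := by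
  refine monotone_nat_of_le_succ fun n ↦ ?_
  have hlog := log_add_one_sub_log_le (x := (n : ℝ) + 1) (by positivity)
  simp only [harmonic_succ (n + 1), Rat.cast_add, Rat.cast_inv, Rat.cast_natCast]
  push_cast at hlog ⊢
  field_simp at hlog ⊢
  linarith

lemma tendsto_harmonic_sub_log_sub_one_div_two_mul :
    Tendsto (fun n : ℕ ↦
      (harmonic (n + 1) : ℝ) - log ((n + 1 : ℕ) : ℝ) - 1 / (2 * ((n + 1 : ℕ) : ℝ)))
      atTop (𝓝 eulerMascheroniConstant) := by
  have h := (tendsto_harmonic_sub_log.comp (tendsto_add_atTop_nat 1)).sub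
    (tendsto_one_div_add_atTop_nhds_zero_nat.div_const 2)
  rw [zero_div, sub_zero] at h
  refine h.congr fun n ↦ ?_
  simp only [Function.comp_apply, Nat.cast_add_one, div_div, mul_comm]

/-- For every `n ≥ 1`, `0 ≤ H_n - ln n - γ ≤ 1/(2n)`, where `H_n` is the `n`-th harmonic
number and `γ` is the Euler–Mascheroni constant. -/
theorem stmt_4 (n : ℕ) (hn : 1 ≤ n) :
    0 ≤ (harmonic n : ℝ) - Real.log n - Real.eulerMascheroniConstant ∧
      (harmonic n : ℝ) - Real.log n - Real.eulerMascheroniConstant ≤ 1 / (2 * n) := by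
  obtain ⟨m, rfl⟩ := Nat.exists_eq_add_of_le' hn
  have hupper := eulerMascheroniConstant_lt_eulerMascheroniSeq' (m + 1)
  rw [eulerMascheroniSeq', if_neg m.succ_ne_zero] at hupper
  have hlower := monotone_harmonic_sub_log_sub_one_div_two_mul.ge_of_tendsto
    tendsto_harmonic_sub_log_sub_one_div_two_mul m
  constructor <;> linarith
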